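/- arXiv:0704.3169 — 3 statements merged into one kernel-verified Lean document; each statement's English description precedes it below -/
import Mathlib

section
/- Let u be a bounded C^2 function on the half-plane strip Ω = {ζ = x + iy : y ≥ 3/2} satisfying the eigenvalue equation y^2 Δu = 2u (Δ the Euclidean Laplacian), with u → 0 as y → ∞ and |u| ≤ c·(2/3) on {y = 3/2} (i.e. |u(x, 3/2)| ≤ c/y|_{y=3/2}). Then |u(ζ)| ≤ c/y for all ζ ∈ Ω. -/
/-!
Since `y²Δ(1/y) = 2/y`, both `u - c/y` and `-u - c/y` are eigenfunctions of `y²Δ` with the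
positive eigenvalue `2`, so it suffices to show that a subsolution `w` of `y²Δw ≥ μw` (`μ > 0`)
on `{y ≥ a}` that is bounded above, nonpositive on `y = a` and uniformly `≤ ε` for large `y` is
nonpositive. Maximise `w - (b x² + ε)` over a rectangle `[-R, R] × [a, Y]` chosen so that it is
nonpositive on the boundary. At an interior maximum `Δw ≤ 2b`, so `μ w ≤ 2b y² ≤ 2b Y² ≤ μ ε`
for `b` small, i.e. `w ≤ ε` and the maximum is nonpositive as well. Let `b, ε → 0`.
-/

open Filter Set Topology Function

noncomputable def sliceLaplacian (w : ℝ → ℝ → ℝ) (x y : ℝ) : ℝ :=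
  deriv (deriv fun x' => w x' y) x + deriv (deriv fun y' => w x y') y

theorem deriv_deriv_nonpos_of_isLocalMax {f : ℝ → ℝ} {x₀ : ℝ} (hmax : IsLocalMax f x₀)
    (hc : ContinuousAt f x₀) : deriv (deriv f) x₀ ≤ 0 := by
  by_contra! hpos
  -- `x₀` would also be a local minimum, so `f` would be locally constant and `f'' x₀ = 0`.
  have hmin := isLocalMin_of_deriv_deriv_pos hpos hmax.deriv_eq_zero hc
  have hconst : f =ᶠ[𝓝 x₀] fun _ => f x₀ :=
    (hmax.and hmin).mono fun _ hx => le_antisymm hx.1 hx.2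
  simp [hconst.deriv.deriv_eq] at hpos

theorem deriv_deriv_sub {f g : ℝ → ℝ} {x : ℝ} (hf : ContDiffAt ℝ 2 f x)
    (hg : ContDiffAt ℝ 2 g x) :
    deriv (deriv fun t => f t - g t) x = deriv (deriv f) x - deriv (deriv g) x := by
  simpa [iteratedDeriv_succ] using iteratedDeriv_fun_sub hf hg

theorem sliceLaplacian_sub {f g : ℝ → ℝ → ℝ} {x y : ℝ} (hf : ContDiffAt ℝ 2 (uncurry f) (x, y))
    (hg : ContDiffAt ℝ 2 (uncurry g) (x, y)) :
    sliceLaplacian (fun x y => f x y - g x y) x y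
      = sliceLaplacian f x y - sliceLaplacian g x y := by
  have slice_fst {h : ℝ → ℝ → ℝ} (hh : ContDiffAt ℝ 2 (uncurry h) (x, y)) :
      ContDiffAt ℝ 2 (fun x' => h x' y) x :=
    hh.comp x (contDiffAt_id.prodMk contDiffAt_const)
  have slice_snd {h : ℝ → ℝ → ℝ} (hh : ContDiffAt ℝ 2 (uncurry h) (x, y)) :
      ContDiffAt ℝ 2 (fun y' => h x y') y :=
    hh.comp y (contDiffAt_const.prodMk contDiffAt_id)
  simp only [sliceLaplacian, deriv_deriv_sub (slice_fst hf) (slice_fst hg),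
    deriv_deriv_sub (slice_snd hf) (slice_snd hg)]
  ring

theorem sliceLaplacian_neg (f : ℝ → ℝ → ℝ) (x y : ℝ) :
    sliceLaplacian (fun x y => -f x y) x y = -sliceLaplacian f x y := by
  simp only [sliceLaplacian, deriv.fun_neg']
  ring

theorem sliceLaplacian_div_snd (c : ℝ) {x y : ℝ} (hy : y ≠ 0) :
    sliceLaplacian (fun _ y => c / y) x y = 2 * c / y ^ 3 := by
  have hderiv : deriv (fun y' : ℝ => c / y') = fun y' => -c * (y' ^ 2)⁻¹ := by
    funext t
    simp [div_eq_mul_inv]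
  have hderiv2 := ((hasDerivAt_pow 2 y).fun_inv (pow_ne_zero 2 hy)).const_mul (-c)
  simp only [sliceLaplacian, deriv_const', hderiv, hderiv2.deriv, zero_add]
  field_simp
  ring

theorem sliceLaplacian_quadratic_fst (b ε x y : ℝ) :
    sliceLaplacian (fun x _ => b * x ^ 2 + ε) x y = 2 * b := by
  simp [sliceLaplacian, mul_comm]

theorem sliceLaplacian_nonpos_of_isLocalMax {W : ℝ → ℝ → ℝ} {x y : ℝ}
    (hW : ContDiffAt ℝ 2 (uncurry W) (x, y)) (hmax : IsLocalMax (uncurry W) (x, y)) :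
    sliceLaplacian W x y ≤ 0 := by
  have hfst : ContinuousAt (fun x' : ℝ => (x', y)) x := by fun_prop
  have hsnd : ContinuousAt (fun y' : ℝ => (x, y')) y := by fun_prop
  have hWc := hW.continuousAt
  exact add_nonpos
    (deriv_deriv_nonpos_of_isLocalMax (hmax.comp_continuous (g := fun x' => (x', y)) hfst)
      (hWc.comp (f := fun x' => (x', y)) hfst))
    (deriv_deriv_nonpos_of_isLocalMax (hmax.comp_continuous (g := fun y' => (x, y')) hsnd)
      (hWc.comp (f := fun y' => (x, y')) hsnd))

section MaximumPrinciple

variable {a μ b ε : ℝ} {w : ℝ → ℝ → ℝ}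

theorem penalized_nonpos_of_isLocalMax {x y Y : ℝ} (hw : ContDiffAt ℝ 2 (uncurry w) (x, y))
    (hsub : μ * w x y ≤ y ^ 2 * sliceLaplacian w x y) (hμ : 0 < μ) (hb : 0 ≤ b)
    (hyY : y ^ 2 ≤ Y ^ 2) (hbY : 2 * b * Y ^ 2 ≤ μ * ε)
    (hmax : IsLocalMax (uncurry fun x y => w x y - (b * x ^ 2 + ε)) (x, y)) :
    w x y - (b * x ^ 2 + ε) ≤ 0 := by
  have hpenalty : ContDiffAt ℝ 2 (uncurry fun x (_ : ℝ) => b * x ^ 2 + ε) (x, y) := by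
    simp only [uncurry_def]; fun_prop
  have hlap := sliceLaplacian_nonpos_of_isLocalMax
    (W := fun x y => w x y - (b * x ^ 2 + ε)) (hw.sub hpenalty) hmax
  rw [sliceLaplacian_sub hw hpenalty, sliceLaplacian_quadratic_fst] at hlap
  have hwε : μ * w x y ≤ μ * ε := by nlinarith [sq_nonneg y]
  linarith [le_of_mul_le_mul_left hwε hμ, mul_nonneg hb (sq_nonneg x)]

theorem penalized_nonpos_of_mem_boundary {M R Y : ℝ} (hM : ∀ x y, a ≤ y → w x y ≤ M)
    (hbound : ∀ x, w x a ≤ 0) (hY : ∀ x, w x Y ≤ ε) (hε : 0 ≤ ε) (hb : 0 ≤ b)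
    (hMR : M ≤ b * R ^ 2) {x y : ℝ} (hmem : (x, y) ∈ Icc (-R) R ×ˢ Icc a Y)
    (hnot : (x, y) ∉ Ioo (-R) R ×ˢ Ioo a Y) : w x y - (b * x ^ 2 + ε) ≤ 0 := by
  obtain ⟨⟨hxl, hxr⟩, hya, hyY⟩ : (-R ≤ x ∧ x ≤ R) ∧ a ≤ y ∧ y ≤ Y := hmem
  have hpen : 0 ≤ b * x ^ 2 := mul_nonneg hb (sq_nonneg x)
  simp only [mem_prod, mem_Ioo, not_and_or, not_lt] at hnot
  rcases hnot with (hx | hx) | (hy | hy)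
  · rw [le_antisymm hx hxl, neg_sq]
    linarith [hM (-R) y hya]
  · rw [le_antisymm hxr hx]
    linarith [hM R y hya]
  · rw [le_antisymm hy hya]
    linarith [hbound x]
  · rw [le_antisymm hyY hy]
    linarith [hY x]

theorem le_mul_sq_add_of_subsolution {M Y x₀ y₀ : ℝ} (ha : 0 < a) (hμ : 0 < μ)
    (hw : ContDiffOn ℝ 2 (uncurry w) {p | 0 < p.2})
    (hsub : ∀ x y, a < y → μ * w x y ≤ y ^ 2 * sliceLaplacian w x y)
    (hM : ∀ x y, a ≤ y → w x y ≤ M) (hbound : ∀ x, w x a ≤ 0) (hY : ∀ x, w x Y ≤ ε)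
    (hε : 0 ≤ ε) (hb : 0 < b) (hbY : 2 * b * Y ^ 2 ≤ μ * ε) (hy₀ : a ≤ y₀) (hy₀Y : y₀ ≤ Y) :
    w x₀ y₀ ≤ b * x₀ ^ 2 + ε := by
  set R := |x₀| + |M| / b + 1
  have hMR : M ≤ b * R ^ 2 := by
    have hbR : b * R = b * |x₀| + |M| + b := by
      simp only [R]; field_simp
    have hR : 1 ≤ R := by linarith [abs_nonneg x₀, div_nonneg (abs_nonneg M) hb.le]
    calc M ≤ |M| := le_abs_self M
      _ ≤ b * R := by linarith [mul_nonneg hb.le (abs_nonneg x₀)]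
      _ ≤ b * R * R := le_mul_of_one_le_right (by nlinarith) hR
      _ = b * R ^ 2 := by ring
  set K := Icc (-R) R ×ˢ Icc a Y
  have hx₀K : (x₀, y₀) ∈ K := by
    refine ⟨abs_le.mp ?_, hy₀, hy₀Y⟩
    linarith [div_nonneg (abs_nonneg M) hb.le]
  have hK : K ⊆ {p | 0 < p.2} := fun p hp => ha.trans_le hp.2.1
  have hcont : ContinuousOn (uncurry fun x y => w x y - (b * x ^ 2 + ε)) K :=
    (hw.continuousOn.mono hK).sub (by fun_prop)
  obtain ⟨⟨x, y⟩, hpK, hpmax⟩ := (isCompact_Icc.prod isCompact_Icc).exists_isMaxOn ⟨_, hx₀K⟩ hcont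
  have hle : w x₀ y₀ - (b * x₀ ^ 2 + ε) ≤ w x y - (b * x ^ 2 + ε) := hpmax hx₀K
  suffices w x y - (b * x ^ 2 + ε) ≤ 0 by linarith
  by_cases hint : (x, y) ∈ Ioo (-R) R ×ˢ Ioo a Y
  · have hy : a < y := hint.2.1
    have hwxy : ContDiffAt ℝ 2 (uncurry w) (x, y) :=
      hw.contDiffAt ((isOpen_lt continuous_const continuous_snd).mem_nhds (ha.trans hy))
    have hKnhds : K ∈ 𝓝 (x, y) :=
      mem_of_superset ((isOpen_Ioo.prod isOpen_Ioo).mem_nhds hint)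
        (prod_mono Ioo_subset_Icc_self Ioo_subset_Icc_self)
    exact penalized_nonpos_of_isLocalMax hwxy (hsub x y hy) hμ hb.le
      (pow_le_pow_left₀ (ha.trans hy).le hint.2.2.le 2) hbY (hpmax.isLocalMax hKnhds)
  · exact penalized_nonpos_of_mem_boundary hM hbound hY hε hb.le hMR hpK hint

theorem nonpos_of_subsolution (ha : 0 < a) (hμ : 0 < μ)
    (hw : ContDiffOn ℝ 2 (uncurry w) {p | 0 < p.2})
    (hsub : ∀ x y, a < y → μ * w x y ≤ y ^ 2 * sliceLaplacian w x y)
    (hbdd : ∃ M, ∀ x y, a ≤ y → w x y ≤ M)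
    (hlim : ∀ ε, 0 < ε → ∃ Y, ∀ x y, Y ≤ y → w x y ≤ ε)
    (hbound : ∀ x, w x a ≤ 0) {x₀ y₀ : ℝ} (hy₀ : a ≤ y₀) : w x₀ y₀ ≤ 0 := by
  obtain ⟨M, hM⟩ := hbdd
  refine le_of_forall_pos_le_add fun δ hδ => ?_
  obtain ⟨Y₀, hY₀⟩ := hlim (δ / 2) (half_pos hδ)
  set Y := max Y₀ y₀
  have hY : 0 < Y := (ha.trans_le hy₀).trans_le (le_max_right _ _)
  set b := min (μ * (δ / 2) / (2 * Y ^ 2)) (δ / 2 / (x₀ ^ 2 + 1))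
  have hb : 0 < b := lt_min (by positivity) (by positivity)
  have hbY : 2 * b * Y ^ 2 ≤ μ * (δ / 2) :=
    calc 2 * b * Y ^ 2 ≤ 2 * (μ * (δ / 2) / (2 * Y ^ 2)) * Y ^ 2 := by
          gcongr; exact min_le_left _ _
      _ = μ * (δ / 2) := by field_simp
  have hbx : b * x₀ ^ 2 ≤ δ / 2 :=
    calc b * x₀ ^ 2 ≤ δ / 2 / (x₀ ^ 2 + 1) * (x₀ ^ 2 + 1) := by
          gcongr
          · exact min_le_right _ _
          · linarith
      _ = δ / 2 := by field_simp
  have hpen := le_mul_sq_add_of_subsolution (x₀ := x₀) ha hμ hw hsub hM hbound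
    (fun x => hY₀ x Y (le_max_left _ _)) (half_pos hδ).le hb hbY hy₀ (le_max_right _ _)
  linarith

end MaximumPrinciple

theorem le_div_of_eigenfunction {a c : ℝ} {u : ℝ → ℝ → ℝ} (ha : 0 < a) (hc : 0 ≤ c)
    (hu : ContDiff ℝ 2 (uncurry u))
    (heq : ∀ x y, a < y → y ^ 2 * sliceLaplacian u x y = 2 * u x y)
    (hbdd : ∃ M, ∀ x y, a ≤ y → u x y ≤ M)
    (hlim : ∀ ε, 0 < ε → ∃ Y, ∀ x y, Y ≤ y → u x y ≤ ε)
    (hbound : ∀ x, u x a ≤ c / a) {x y : ℝ} (hy : a ≤ y) : u x y ≤ c / y := by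
  have hdiv : ContDiffOn ℝ 2 (uncurry fun (_ y : ℝ) => c / y) {p | 0 < p.2} :=
    contDiffOn_const.div contDiffOn_snd fun p hp => hp.ne'
  refine sub_nonpos.mp (nonpos_of_subsolution (w := fun x y => u x y - c / y) ha two_pos
    (hu.contDiffOn.sub hdiv) (fun x y hy => le_of_eq ?_) ?_ ?_ (fun x => ?_) hy)
  · have hy₀ : 0 < y := ha.trans hy
    rw [sliceLaplacian_sub hu.contDiffAt
      (hdiv.contDiffAt ((isOpen_lt continuous_const continuous_snd).mem_nhds hy₀)),
      sliceLaplacian_div_snd c hy₀.ne', mul_sub (y ^ 2), heq x y hy]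
    field_simp
  · obtain ⟨M, hM⟩ := hbdd
    exact ⟨M, fun x y hy => by linarith [hM x y hy, div_nonneg hc (ha.trans_le hy).le]⟩
  · intro ε hε
    obtain ⟨Y, hY⟩ := hlim ε hε
    refine ⟨max Y a, fun x y hy => ?_⟩
    linarith [hY x y ((le_max_left _ _).trans hy),
      div_nonneg hc (ha.trans_le ((le_max_right _ _).trans hy)).le]
  · linarith [hbound x]

/-- Maximum-principle comparison: a bounded eigenfunction `u` of `y²Δ` with
eigenvalue `2` on `{y ≥ 3/2}`, vanishing at infinity and bounded by `c/y` on the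
boundary, satisfies `|u| ≤ c/y` throughout. -/
theorem eigenfunction_comparison (c : ℝ) (hc : 0 ≤ c) (u : ℝ → ℝ → ℝ)
    (hC2 : ContDiff ℝ 2 (fun p : ℝ × ℝ => u p.1 p.2))
    (hbdd : ∃ M : ℝ, ∀ x y : ℝ, 3 / 2 ≤ y → |u x y| ≤ M)
    (heq : ∀ x y : ℝ, 3 / 2 ≤ y →
      y ^ 2 * (deriv (deriv (fun x' : ℝ => u x' y)) x
        + deriv (deriv (fun y' : ℝ => u x y')) y) = 2 * u x y)
    (hlim : ∀ ε : ℝ, 0 < ε → ∃ Y : ℝ, ∀ x y : ℝ, Y ≤ y → |u x y| ≤ ε)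
    (hbound : ∀ x : ℝ, |u x (3 / 2)| ≤ c / (3 / 2)) :
    ∀ x y : ℝ, 3 / 2 ≤ y → |u x y| ≤ c / y := by
  obtain ⟨M, hM⟩ := hbdd
  intro x y hy
  have hupper : u x y ≤ c / y :=
    le_div_of_eigenfunction (by norm_num) hc hC2 (fun x y hy => heq x y hy.le)
      ⟨M, fun x y hy => (abs_le.mp (hM x y hy)).2⟩
      (fun ε hε => (hlim ε hε).imp fun _ hY x y hy => (abs_le.mp (hY x y hy)).2)
      (fun x => (abs_le.mp (hbound x)).2) hy
  have hlower : -u x y ≤ c / y :=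
    le_div_of_eigenfunction (u := fun x y => -u x y) (by norm_num) hc hC2.neg
      (fun x y hy => by
        rw [sliceLaplacian_neg, mul_neg, mul_neg, neg_inj]
        exact heq x y hy.le)
      ⟨M, fun x y hy => neg_le.mp (abs_le.mp (hM x y hy)).1⟩
      (fun ε hε => (hlim ε hε).imp fun _ hY x y hy => neg_le.mp (abs_le.mp (hY x y hy)).1)
      (fun x => neg_le.mp (abs_le.mp (hbound x)).1) hy
  exact abs_le.mpr ⟨neg_le.mp hlower, hupper⟩
end

section
/- Block determinant asymptotics: let 𝒜 be a symmetric (m+n)×(m+n) matrix with diagonal entries λ_1,…,λ_n in the first n positions, off-diagonal entries a_{jℓ} in rows/columns 1..n bounded by M, and lower-right m×m block B with entries bounded by M and det B ≠ 0. Then with ρ = Σ_{k=1}^n λ_k^{-1}, det 𝒜 = (det B)·(∏_{k=1}^n λ_k)·(1 + O(ρ)), where the O-constant depends only on m+n, M and det B^{-1}, valid for all λ_k sufficiently large. -/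
/-!
Expand `det 𝒜` and `det (fromBlocks (diagonal λ) 0 0 B) = (∏ λ_k) · det B` by the Leibniz
formula. The two expansions agree term by term on every permutation fixing the first `n`
indices. Any other permutation `σ` moves some `k ≤ n`; its term then lacks the factor `λ_k`,
and since every entry is bounded by `max M 1` times the weight `λ_i` (on the diagonal) or `1`
(off it), the term is `O(∏ λ / λ_k)`. Summing over the `(n + m)!` permutations gives the claim.
-/

open Finset Matrix Nat

namespace Matrix

variable {ι : Type*} [Fintype ι]

theorem prod_perm_eq_of_forall_mem_fixed {R : Type*} [CommMonoid R] {X Y : Matrix ι ι R} {s : Finset ι}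
    (hdiag : ∀ i ∈ s, X i i = Y i i) (hblock : ∀ i ∉ s, ∀ j ∉ s, X i j = Y i j)
    {σ : Equiv.Perm ι} (hσ : ∀ k ∈ s, σ k = k) :
    ∏ i, X (σ i) i = ∏ i, Y (σ i) i := by
  refine prod_congr rfl fun i _ => ?_
  by_cases hi : i ∈ s
  · rw [hσ i hi]; exact hdiag i hi
  · refine hblock _ (fun hσi => hi ?_) _ hi
    rwa [σ.injective (hσ _ hσi)] at hσi

variable [DecidableEq ι]

theorem abs_prod_perm_le_of_apply_ne {X : Matrix ι ι ℝ} {w : ι → ℝ} {K : ℝ}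
    (hw : ∀ i, 1 ≤ w i) (hdiag : ∀ i, |X i i| ≤ K * w i) (hoff : ∀ i j, i ≠ j → |X i j| ≤ K)
    {σ : Equiv.Perm ι} {k : ι} (hk : σ k ≠ k) :
    |∏ i, X (σ i) i| ≤ K ^ Fintype.card ι * (∏ i, w i) / w k := by
  have hK : 0 ≤ K := (abs_nonneg _).trans (hoff _ _ hk)
  have hbound : ∀ i, |X (σ i) i| ≤ K * Function.update w k 1 i := by
    intro i
    rcases eq_or_ne i k with rfl | hik
    · simpa using hoff _ _ hk
    rw [Function.update_of_ne hik]
    by_cases hi : σ i = i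
    · rw [hi]; exact hdiag i
    · exact (hoff _ _ hi).trans (le_mul_of_one_le_right hK (hw i))
  have hprod : ∏ i, Function.update w k 1 i = (∏ i, w i) / w k := by
    rw [eq_div_iff (by linarith [hw k]), prod_update_of_mem (mem_univ k), one_mul,
      ← prod_erase_mul _ _ (mem_univ k), sdiff_singleton_eq_erase]
  calc |∏ i, X (σ i) i| = ∏ i, |X (σ i) i| := abs_prod _ _
    _ ≤ ∏ i, K * Function.update w k 1 i :=
      prod_le_prod (fun _ _ => abs_nonneg _) fun i _ => hbound i
    _ = _ := by rw [prod_mul_distrib, prod_const, Finset.card_univ, hprod, mul_div_assoc]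

theorem abs_det_sub_det_le {X Y : Matrix ι ι ℝ} {w : ι → ℝ} {K : ℝ} {s : Finset ι}
    (hw : ∀ i, 1 ≤ w i) (hK : 0 ≤ K)
    (hXdiag : ∀ i, |X i i| ≤ K * w i) (hXoff : ∀ i j, i ≠ j → |X i j| ≤ K)
    (hYdiag : ∀ i, |Y i i| ≤ K * w i) (hYoff : ∀ i j, i ≠ j → |Y i j| ≤ K)
    (hdiag : ∀ i ∈ s, X i i = Y i i) (hblock : ∀ i ∉ s, ∀ j ∉ s, X i j = Y i j) :
    |X.det - Y.det| ≤
      (Fintype.card ι)! * (2 * K ^ Fintype.card ι * (∏ i, w i) * ∑ k ∈ s, (w k)⁻¹) := by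
  have hw0 : ∀ i, 0 ≤ w i := fun i => zero_le_one.trans (hw i)
  have hterm : ∀ σ : Equiv.Perm ι, |∏ i, X (σ i) i - ∏ i, Y (σ i) i| ≤
      2 * K ^ Fintype.card ι * (∏ i, w i) * ∑ k ∈ s, (w k)⁻¹ := by
    intro σ
    by_cases hσ : ∀ k ∈ s, σ k = k
    · rw [prod_perm_eq_of_forall_mem_fixed hdiag hblock hσ, sub_self, abs_zero]
      exact mul_nonneg (mul_nonneg (by positivity) (prod_nonneg fun i _ => hw0 i))
        (sum_nonneg fun k _ => inv_nonneg.mpr (hw0 k))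
    push Not at hσ
    obtain ⟨k, hks, hk⟩ := hσ
    have hwk : (w k)⁻¹ ≤ ∑ j ∈ s, (w j)⁻¹ :=
      single_le_sum (f := fun j => (w j)⁻¹) (fun j _ => inv_nonneg.mpr (hw0 j)) hks
    calc |∏ i, X (σ i) i - ∏ i, Y (σ i) i| ≤ |∏ i, X (σ i) i| + |∏ i, Y (σ i) i| := abs_sub _ _
      _ ≤ 2 * K ^ Fintype.card ι * (∏ i, w i) * (w k)⁻¹ := by
        have hX := abs_prod_perm_le_of_apply_ne hw hXdiag hXoff hk
        have hY := abs_prod_perm_le_of_apply_ne hw hYdiag hYoff hk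
        rw [div_eq_mul_inv] at hX hY
        linarith
      _ ≤ _ := mul_le_mul_of_nonneg_left hwk
        (mul_nonneg (by positivity) (prod_nonneg fun i _ => hw0 i))
  rw [det_apply, det_apply, ← sum_sub_distrib]
  calc _ ≤ ∑ σ : Equiv.Perm ι, |σ.sign • ∏ i, X (σ i) i - σ.sign • ∏ i, Y (σ i) i| :=
        abs_sum_le_sum_abs _ _
    _ = ∑ σ : Equiv.Perm ι, |∏ i, X (σ i) i - ∏ i, Y (σ i) i| := by
        simp_rw [← smul_sub, ← Real.norm_eq_abs, norm_units_zsmul]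
    _ ≤ _ := by
        simpa [Fintype.card_perm] using sum_le_card_nsmul univ _ _ fun σ _ => hterm σ

section FromBlocks

variable {α β : Type*} {lam : α → ℝ} {K : ℝ} {P : Matrix α α ℝ} {Q : Matrix α β ℝ}
  {R : Matrix β α ℝ} {S : Matrix β β ℝ}

theorem abs_fromBlocks_diagonal_add_apply_self_le [DecidableEq α] (hlam : ∀ k, 0 ≤ lam k)
    (hK : 1 ≤ K) (hP : ∀ k, P k k = 0) (hS : ∀ i j, |S i j| ≤ K) (i : α ⊕ β) :
    |fromBlocks (diagonal lam + P) Q R S i i| ≤ K * Sum.elim lam 1 i := by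
  rcases i with i | i
  · simpa [hP, abs_of_nonneg (hlam i)] using le_mul_of_one_le_left (hlam i) hK
  · simpa using hS i i

theorem abs_fromBlocks_diagonal_add_apply_le_of_ne [DecidableEq α]
    (hP : ∀ i j, |P i j| ≤ K) (hQ : ∀ i j, |Q i j| ≤ K) (hR : ∀ i j, |R i j| ≤ K)
    (hS : ∀ i j, |S i j| ≤ K) {i j : α ⊕ β} (hij : i ≠ j) :
    |fromBlocks (diagonal lam + P) Q R S i j| ≤ K := by
  rcases i with i | i <;> rcases j with j | j
  · have hij : i ≠ j := fun h => hij (h ▸ rfl)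
    simpa [diagonal_apply_ne _ hij] using hP i j
  · exact hQ i j
  · exact hR i j
  · exact hS i j

end FromBlocks

end Matrix

theorem abs_div_sub_one_le {a b c : ℝ} (hb : b ≠ 0) (h : |a - b| ≤ c * |b|) :
    |a / b - 1| ≤ c := by
  rwa [div_sub_one hb, abs_div, div_le_iff₀ (abs_pos.mpr hb)]

theorem block_determinant_asymptotics_general (m n : ℕ) (M : ℝ)
    (B : Matrix (Fin m) (Fin m) ℝ) (hBdet : B.det ≠ 0)
    (hBbd : ∀ i j, |B i j| ≤ M) :
    ∃ C lam0 : ℝ, 0 < C ∧ 0 < lam0 ∧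
      ∀ (lam : Fin n → ℝ) (A' : Matrix (Fin n) (Fin n) ℝ) (A'' : Matrix (Fin n) (Fin m) ℝ),
        (∀ k, lam0 ≤ lam k) → A'.IsSymm → (∀ k, A' k k = 0) →
        (∀ i j, |A' i j| ≤ M) → (∀ i j, |A'' i j| ≤ M) →
        |(Matrix.fromBlocks (Matrix.diagonal lam + A') A'' A''.transpose B).det
            / (B.det * ∏ k, lam k) - 1| ≤ C * ∑ k, (lam k)⁻¹ := by
  set K := max M 1
  have hK : 1 ≤ K := le_max_right _ _
  have hMK : M ≤ K := le_max_left _ _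
  refine ⟨(n + m)! * (2 * K ^ (n + m)) / |B.det|, 1, by positivity, one_pos, ?_⟩
  intro lam A' A'' hlam _ hA'diag hA'bd hA''bd
  have hlam0 : ∀ k, 0 ≤ lam k := fun k => zero_le_one.trans (hlam k)
  have hprod : 0 < ∏ k, lam k := prod_pos fun k _ => one_pos.trans_le (hlam k)
  have hw : ∀ i : Fin n ⊕ Fin m, 1 ≤ Sum.elim lam 1 i := by rintro (i | i) <;> simp [hlam]
  have hB : ∀ i j, |B i j| ≤ K := fun i j => (hBbd i j).trans hMK
  have hK0 : 0 ≤ K := zero_le_one.trans hK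
  have hzero : ∀ {a b : Type} (i : a) (j : b), |(0 : Matrix a b ℝ) i j| ≤ K := by simp [hK0]
  have key := abs_det_sub_det_le (X := fromBlocks (diagonal lam + A') A'' A''ᵀ B)
    -- `+ 0` lets the entry bounds proved for `𝒜` apply to the comparison matrix as well
    (Y := fromBlocks (diagonal lam + 0) 0 0 B) (s := univ.map .inl) hw hK0
    (abs_fromBlocks_diagonal_add_apply_self_le hlam0 hK hA'diag hB)
    (fun _ _ => abs_fromBlocks_diagonal_add_apply_le_of_ne (fun i j => (hA'bd i j).trans hMK)
      (fun i j => (hA''bd i j).trans hMK) (fun i j => (hA''bd j i).trans hMK) hB)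
    (abs_fromBlocks_diagonal_add_apply_self_le (P := 0) hlam0 hK (fun _ => rfl) hB)
    (fun _ _ => abs_fromBlocks_diagonal_add_apply_le_of_ne hzero hzero hzero hB)
    (by simp [hA'diag]) (by simp)
  rw [add_zero, det_fromBlocks_zero₂₁, det_diagonal, Fintype.card_sum, Fintype.card_fin,
    Fintype.card_fin, Fintype.prod_sum_type, sum_map, mul_comm (∏ i, lam i)] at key
  simp only [Sum.elim_inl, Sum.elim_inr, Function.Embedding.inl_apply, Pi.one_apply,
    prod_const_one, mul_one] at key
  refine abs_div_sub_one_le (mul_ne_zero hBdet hprod.ne') (key.trans_eq ?_)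
  have := abs_ne_zero.mpr hBdet
  rw [abs_mul, abs_of_pos hprod]
  field_simp

/-- Block determinant asymptotics:
`det 𝒜 = det B · ∏ λ_k · (1 + O(ρ))` with `ρ = Σ λ_k⁻¹`, for
`𝒜 = fromBlocks (diag λ + A') A'' A''ᵀ B` with bounded entries. -/
theorem block_determinant_asymptotics (m n : ℕ) (M : ℝ) (hM : 0 < M)
    (B : Matrix (Fin m) (Fin m) ℝ) (hBsymm : B.IsSymm) (hBdet : B.det ≠ 0)
    (hBbd : ∀ i j, |B i j| ≤ M) :
    ∃ C lam0 : ℝ, 0 < C ∧ 0 < lam0 ∧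
      ∀ (lam : Fin n → ℝ) (A' : Matrix (Fin n) (Fin n) ℝ) (A'' : Matrix (Fin n) (Fin m) ℝ),
        (∀ k, lam0 ≤ lam k) → A'.IsSymm → (∀ k, A' k k = 0) →
        (∀ i j, |A' i j| ≤ M) → (∀ i j, |A'' i j| ≤ M) →
        |(Matrix.fromBlocks (Matrix.diagonal lam + A') A'' A''.transpose B).det
            / (B.det * ∏ k, lam k) - 1| ≤ C * ∑ k, (lam k)⁻¹ :=
  block_determinant_asymptotics_general m n M B hBdet hBbd
end

section
/- Inverse block entry asymptotics: in the setting of the block determinant lemma, the inverse 𝒜^{-1} = (α_{jℓ}) satisfies: α_{kk} = λ_k^{-1}(1 + O(ρ)) for 1 ≤ k ≤ n; α_{jℓ} = O((λ_j λ_ℓ)^{-1}) for 1 ≤ j < ℓ ≤ n; α_{jℓ} = O(λ_j^{-1}) for 1 ≤ j ≤ n < ℓ ≤ m+n; and α_{j+n, ℓ+n} = b^{jℓ}(1 + O(ρ)) for 1 ≤ j, ℓ ≤ m, where (b^{jℓ}) = B^{-1} and ρ = Σ_k λ_k^{-1}. -/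
/-!
Take the Schur complement with respect to the fixed invertible block `B`: the upper-left block of
`𝒜⁻¹` is `(D + G)⁻¹`, where `D = diagonal λ` and `G = A' - A'' B⁻¹ A''ᵀ` has entries bounded by
`K = M + M² ∑ |B⁻¹ a b|`. Once `2 K ρ ≤ 1` (with `ρ = ∑ λ_k⁻¹`), rewriting `(D + G) x = y` as
`x = D⁻¹ (y - G x)` gives `∑ |x_a| ≤ 2 ∑ |y_a| / λ_a`; hence `D + G` is invertible and every column
(and, via the transpose, every row) of `(D + G)⁻¹` has ℓ¹-norm at most `2 / λ`. The second-order
expansion `(D + G)⁻¹ = D⁻¹ - D⁻¹ G D⁻¹ + D⁻¹ (G (D + G)⁻¹ G) D⁻¹` then puts each entry of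
`(D + G)⁻¹` within `2 K / (λ_i λ_j)` of `D⁻¹`, and the other three blocks of the Schur formula are
products of `(D + G)⁻¹` with bounded matrices.
-/

open Matrix

theorem two_mul_mul_sum_inv_le_one {ι : Type*} [Fintype ι] {lam : ι → ℝ} {K : ℝ} (hK : 0 ≤ K)
    (hlam : ∀ k, 2 * Fintype.card ι * K + 1 ≤ lam k) : 2 * K * ∑ k, (lam k)⁻¹ ≤ 1 := by
  have hsum : ∑ k, (lam k)⁻¹ ≤ Fintype.card ι * (2 * Fintype.card ι * K + 1)⁻¹ := by
    simpa using Finset.sum_le_card_nsmul Finset.univ _ _ fun k _ =>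
      inv_anti₀ (by positivity) (hlam k)
  calc 2 * K * ∑ k, (lam k)⁻¹ ≤ 2 * Fintype.card ι * K * (2 * Fintype.card ι * K + 1)⁻¹ := by
        nlinarith
    _ ≤ 1 := by rw [← div_eq_mul_inv, div_le_one (by positivity)]; linarith

namespace Matrix

section EntryBounds

variable {ι κ μ ν : Type*} [Fintype κ] [Fintype μ]

theorem abs_mul_apply_le_sum_abs_mul {X : Matrix ι κ ℝ} {Y : Matrix κ ν ℝ} {i : ι} {j : ν}
    {c : ℝ} (hY : ∀ k, |Y k j| ≤ c) : |(X * Y) i j| ≤ (∑ k, |X i k|) * c := by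
  rw [mul_apply, Finset.sum_mul]
  refine (Finset.abs_sum_le_sum_abs _ _).trans (Finset.sum_le_sum fun k _ => ?_)
  rw [abs_mul]
  exact mul_le_mul_of_nonneg_left (hY k) (abs_nonneg _)

theorem abs_mul_apply_le_mul_sum_abs {X : Matrix ι κ ℝ} {Y : Matrix κ ν ℝ} {i : ι} {j : ν}
    {c : ℝ} (hX : ∀ k, |X i k| ≤ c) : |(X * Y) i j| ≤ c * ∑ k, |Y k j| := by
  rw [mul_apply, Finset.mul_sum]
  refine (Finset.abs_sum_le_sum_abs _ _).trans (Finset.sum_le_sum fun k _ => ?_)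
  rw [abs_mul]
  exact mul_le_mul_of_nonneg_right (hX k) (abs_nonneg _)

theorem abs_mul_mul_apply_le {X : Matrix ι κ ℝ} {Y : Matrix κ μ ℝ} {Z : Matrix μ ν ℝ}
    {i : ι} {j : ν} {c d : ℝ} (hX : ∀ k, |X i k| ≤ c) (hZ : ∀ k, |Z k j| ≤ d) (hc : 0 ≤ c) :
    |(X * Y * Z) i j| ≤ c * d * ∑ a, ∑ b, |Y a b| := by
  rw [Matrix.mul_assoc]
  calc |(X * (Y * Z)) i j| ≤ c * ∑ a, |(Y * Z) a j| := abs_mul_apply_le_mul_sum_abs hX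
    _ ≤ c * ∑ a, (∑ b, |Y a b|) * d := by
      gcongr with a
      exact abs_mul_apply_le_sum_abs_mul hZ
    _ = c * d * ∑ a, ∑ b, |Y a b| := by rw [← Finset.sum_mul]; ring

theorem abs_mul_apply_le_mul_sum_sum_abs {X : Matrix ι κ ℝ} {Y : Matrix κ μ ℝ} {i : ι} {j : μ}
    {c : ℝ} (hX : ∀ k, |X i k| ≤ c) (hc : 0 ≤ c) : |(X * Y) i j| ≤ c * ∑ a, ∑ b, |Y a b| :=
  (abs_mul_apply_le_mul_sum_abs hX).trans <| by
    gcongr with a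
    exact Finset.single_le_sum (fun b _ => abs_nonneg (Y a b)) (Finset.mem_univ j)

theorem abs_mul_apply_le_sum_sum_abs_mul [Fintype ι] {X : Matrix ι κ ℝ} {Y : Matrix κ ν ℝ}
    {i : ι} {j : ν} {c : ℝ} (hY : ∀ k, |Y k j| ≤ c) (hc : 0 ≤ c) :
    |(X * Y) i j| ≤ (∑ a, ∑ b, |X a b|) * c :=
  (abs_mul_apply_le_sum_abs_mul hY).trans <| by
    gcongr
    exact Finset.single_le_sum (f := fun a => ∑ b, |X a b|)
      (fun a _ => Finset.sum_nonneg fun b _ => abs_nonneg (X a b)) (Finset.mem_univ i)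

end EntryBounds

theorem inv_add_eq_second_order {ι α : Type*} [Fintype ι] [DecidableEq ι] [CommRing α]
    (D G : Matrix ι ι α) (hD : IsUnit D.det) (hDG : IsUnit (D + G).det) :
    (D + G)⁻¹ = D⁻¹ - D⁻¹ * G * D⁻¹ + D⁻¹ * (G * (D + G)⁻¹ * G) * D⁻¹ := by
  have hleft : D⁻¹ * G * (D + G)⁻¹ = D⁻¹ - (D + G)⁻¹ :=
    calc D⁻¹ * G * (D + G)⁻¹ = D⁻¹ * ((D + G) * (D + G)⁻¹) - D⁻¹ * D * (D + G)⁻¹ := by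
          noncomm_ring
      _ = D⁻¹ - (D + G)⁻¹ := by
          rw [mul_nonsing_inv _ hDG, nonsing_inv_mul _ hD, Matrix.mul_one, Matrix.one_mul]
  have hright : (D + G)⁻¹ * G * D⁻¹ = D⁻¹ - (D + G)⁻¹ :=
    calc (D + G)⁻¹ * G * D⁻¹ = (D + G)⁻¹ * (D + G) * D⁻¹ - (D + G)⁻¹ * (D * D⁻¹) := by
          noncomm_ring
      _ = D⁻¹ - (D + G)⁻¹ := by
          rw [nonsing_inv_mul _ hDG, mul_nonsing_inv _ hD, Matrix.mul_one, Matrix.one_mul]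
  calc (D + G)⁻¹ = D⁻¹ - D⁻¹ * G * (D⁻¹ - (D + G)⁻¹ * G * D⁻¹) := by
        rw [hright, sub_sub_cancel, hleft, sub_sub_cancel]
    _ = _ := by noncomm_ring

theorem inv_fromBlocks_of_isUnit_det₂₂ {ι κ α : Type*} [Fintype ι] [Fintype κ] [DecidableEq ι]
    [DecidableEq κ] [CommRing α] (A : Matrix ι ι α) (B : Matrix ι κ α) (C : Matrix κ ι α)
    (D : Matrix κ κ α) (hD : IsUnit D.det) (hS : IsUnit (A - B * D⁻¹ * C).det) :
    (fromBlocks A B C D)⁻¹ =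
      fromBlocks (A - B * D⁻¹ * C)⁻¹ (-((A - B * D⁻¹ * C)⁻¹ * B * D⁻¹))
        (-(D⁻¹ * C * (A - B * D⁻¹ * C)⁻¹)) (D⁻¹ + D⁻¹ * C * (A - B * D⁻¹ * C)⁻¹ * B * D⁻¹) := by
  let := D.invertibleOfIsUnitDet hD
  let := (A - B * ⅟D * C).invertibleOfIsUnitDet (by rwa [invOf_eq_nonsing_inv])
  let := fromBlocks₂₂Invertible A B C D
  simp only [← invOf_eq_nonsing_inv]
  exact invOf_fromBlocks₂₂_eq A B C D

section DiagonallyDominant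

variable {ι : Type*} [Fintype ι] [DecidableEq ι] {lam : ι → ℝ} {G : Matrix ι ι ℝ} {K : ℝ}

theorem sum_abs_le_of_diagonal_add_mulVec_eq (hlam : ∀ i, 0 < lam i) (hG : ∀ i j, |G i j| ≤ K)
    (hsmall : 2 * K * ∑ i, (lam i)⁻¹ ≤ 1) {x y : ι → ℝ} (h : (diagonal lam + G) *ᵥ x = y) :
    ∑ a, |x a| ≤ 2 * ∑ a, (lam a)⁻¹ * |y a| := by
  set T := ∑ a, |x a|
  have hx : ∀ a, |x a| ≤ (lam a)⁻¹ * |y a| + K * T * (lam a)⁻¹ := fun a => by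
    have hxa : x a = (lam a)⁻¹ * (y a - (G *ᵥ x) a) := by
      rw [← h, add_mulVec, Pi.add_apply, mulVec_diagonal, add_sub_cancel_right,
        inv_mul_cancel_left₀ (hlam a).ne']
    have hGx : |(G *ᵥ x) a| ≤ K * T := by
      rw [mulVec, dotProduct, Finset.mul_sum]
      refine (Finset.abs_sum_le_sum_abs _ _).trans (Finset.sum_le_sum fun c _ => ?_)
      rw [abs_mul]
      exact mul_le_mul_of_nonneg_right (hG a c) (abs_nonneg _)
    rw [hxa, abs_mul, abs_of_pos (inv_pos.2 (hlam a))]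
    nlinarith [abs_sub (y a) ((G *ᵥ x) a), inv_pos.2 (hlam a)]
  have hsum : T ≤ ∑ a, (lam a)⁻¹ * |y a| + K * T * ∑ a, (lam a)⁻¹ := by
    rw [Finset.mul_sum, ← Finset.sum_add_distrib]
    exact Finset.sum_le_sum fun a _ => hx a
  nlinarith [Finset.sum_nonneg fun a (_ : a ∈ Finset.univ) => abs_nonneg (x a)]

theorem isUnit_det_diagonal_add (hlam : ∀ i, 0 < lam i) (hG : ∀ i j, |G i j| ≤ K)
    (hsmall : 2 * K * ∑ i, (lam i)⁻¹ ≤ 1) : IsUnit (diagonal lam + G).det := by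
  rw [isUnit_iff_ne_zero, Ne, ← exists_mulVec_eq_zero_iff]
  rintro ⟨v, hv, hQv⟩
  have hv0 := sum_abs_le_of_diagonal_add_mulVec_eq hlam hG hsmall hQv
  simp only [Pi.zero_apply, abs_zero, mul_zero, Finset.sum_const_zero] at hv0
  exact hv (funext fun a => abs_nonpos_iff.1
    ((Finset.single_le_sum (fun b _ => abs_nonneg (v b)) (Finset.mem_univ a)).trans hv0))

theorem sum_abs_inv_diagonal_add_col_le (hlam : ∀ i, 0 < lam i) (hG : ∀ i j, |G i j| ≤ K)
    (hsmall : 2 * K * ∑ i, (lam i)⁻¹ ≤ 1) (b : ι) :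
    ∑ a, |(diagonal lam + G)⁻¹ a b| ≤ 2 * (lam b)⁻¹ := by
  have hcol : (diagonal lam + G) *ᵥ (fun a => (diagonal lam + G)⁻¹ a b) =
      fun a => (1 : Matrix ι ι ℝ) a b := by
    rw [← mul_nonsing_inv _ (isUnit_det_diagonal_add hlam hG hsmall)]
    rfl
  have hy : ∑ a, (lam a)⁻¹ * |(1 : Matrix ι ι ℝ) a b| = (lam b)⁻¹ := by
    simp [one_apply, apply_ite]
  simpa only [hy] using sum_abs_le_of_diagonal_add_mulVec_eq hlam hG hsmall hcol

theorem sum_abs_inv_diagonal_add_row_le (hlam : ∀ i, 0 < lam i) (hG : ∀ i j, |G i j| ≤ K)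
    (hsmall : 2 * K * ∑ i, (lam i)⁻¹ ≤ 1) (a : ι) :
    ∑ b, |(diagonal lam + G)⁻¹ a b| ≤ 2 * (lam a)⁻¹ := by
  have hT : (diagonal lam + G)⁻¹ᵀ = (diagonal lam + Gᵀ)⁻¹ := by
    rw [transpose_nonsing_inv, transpose_add, diagonal_transpose]
  have hGT : ∀ i j, |Gᵀ i j| ≤ K := fun i j => hG j i
  simpa only [← hT, transpose_apply] using sum_abs_inv_diagonal_add_col_le hlam hGT hsmall a

theorem sum_sum_abs_inv_diagonal_add_le (hlam : ∀ i, 0 < lam i) (hG : ∀ i j, |G i j| ≤ K)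
    (hsmall : 2 * K * ∑ i, (lam i)⁻¹ ≤ 1) :
    ∑ a, ∑ b, |(diagonal lam + G)⁻¹ a b| ≤ 2 * ∑ a, (lam a)⁻¹ := by
  rw [Finset.mul_sum]
  exact Finset.sum_le_sum fun a _ => sum_abs_inv_diagonal_add_row_le hlam hG hsmall a

theorem abs_inv_diagonal_add_apply_sub_le (hlam : ∀ i, 0 < lam i) (hG : ∀ i j, |G i j| ≤ K)
    (hsmall : 2 * K * ∑ i, (lam i)⁻¹ ≤ 1) (i j : ι) :
    |(diagonal lam + G)⁻¹ i j - diagonal (fun k => (lam k)⁻¹) i j| ≤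
      2 * K * ((lam i)⁻¹ * (lam j)⁻¹) := by
  have hK : 0 ≤ K := (abs_nonneg _).trans (hG i j)
  have hDinv : diagonal (fun k => (lam k)⁻¹) * diagonal lam = 1 := by
    rw [diagonal_mul_diagonal, ← diagonal_one]
    exact congrArg diagonal (funext fun k => inv_mul_cancel₀ (hlam k).ne')
  have hGQG : |(G * (diagonal lam + G)⁻¹ * G) i j| ≤ K := by
    calc _ ≤ K * K * ∑ a, ∑ b, |(diagonal lam + G)⁻¹ a b| :=
          abs_mul_mul_apply_le (fun k => hG i k) (fun k => hG k j) hK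
      _ ≤ K * K * (2 * ∑ a, (lam a)⁻¹) := by
          gcongr; exact sum_sum_abs_inv_diagonal_add_le hlam hG hsmall
      _ ≤ K := by nlinarith
  rw [inv_add_eq_second_order _ _ (isUnit_det_of_left_inverse hDinv)
    (isUnit_det_diagonal_add hlam hG hsmall), inv_eq_left_inv hDinv]
  simp only [add_apply, sub_apply, diagonal_mul, mul_diagonal]
  rw [show ∀ d g f : ℝ, d - (lam i)⁻¹ * g * (lam j)⁻¹ + (lam i)⁻¹ * f * (lam j)⁻¹ - d =
      (lam i)⁻¹ * (lam j)⁻¹ * (f - g) by intros; ring, abs_mul,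
    abs_of_pos (mul_pos (inv_pos.2 (hlam i)) (inv_pos.2 (hlam j)))]
  calc (lam i)⁻¹ * (lam j)⁻¹ * |(G * (diagonal lam + G)⁻¹ * G) i j - G i j|
      ≤ (lam i)⁻¹ * (lam j)⁻¹ * (K + K) :=
        mul_le_mul_of_nonneg_left ((abs_sub _ _).trans (add_le_add hGQG (hG i j)))
          (mul_pos (inv_pos.2 (hlam i)) (inv_pos.2 (hlam j))).le
    _ = 2 * K * ((lam i)⁻¹ * (lam j)⁻¹) := by ring

theorem abs_inv_diagonal_add_apply_self_sub_le (hlam : ∀ i, 0 < lam i)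
    (hG : ∀ i j, |G i j| ≤ K) (hsmall : 2 * K * ∑ i, (lam i)⁻¹ ≤ 1) (k : ι) :
    |(diagonal lam + G)⁻¹ k k - (lam k)⁻¹| ≤ 2 * K * (lam k)⁻¹ * ∑ i, (lam i)⁻¹ := by
  have h := abs_inv_diagonal_add_apply_sub_le hlam hG hsmall k k
  rw [diagonal_apply_eq] at h
  have hK : 0 ≤ K := (abs_nonneg _).trans (hG k k)
  have := hlam k
  calc _ ≤ 2 * K * (lam k)⁻¹ * (lam k)⁻¹ := h.trans_eq (by ring)
    _ ≤ 2 * K * (lam k)⁻¹ * ∑ i, (lam i)⁻¹ := by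
      gcongr
      exact Finset.single_le_sum (fun i _ => (inv_pos.2 (hlam i)).le) (Finset.mem_univ k)

theorem abs_inv_diagonal_add_apply_le_of_ne (hlam : ∀ i, 0 < lam i) (hG : ∀ i j, |G i j| ≤ K)
    (hsmall : 2 * K * ∑ i, (lam i)⁻¹ ≤ 1) {j ℓ : ι} (hjℓ : j ≠ ℓ) :
    |(diagonal lam + G)⁻¹ j ℓ| ≤ 2 * K * (lam j * lam ℓ)⁻¹ := by
  have h := abs_inv_diagonal_add_apply_sub_le hlam hG hsmall j ℓ
  rwa [diagonal_apply_ne _ hjℓ, sub_zero, ← mul_inv] at h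

theorem abs_inv_diagonal_add_mul_apply_le {κ : Type*} {Y : Matrix ι κ ℝ} {c : ℝ}
    (hlam : ∀ i, 0 < lam i) (hG : ∀ i j, |G i j| ≤ K) (hsmall : 2 * K * ∑ i, (lam i)⁻¹ ≤ 1)
    {j : ι} {ℓ : κ} (hY : ∀ a, |Y a ℓ| ≤ c) :
    |((diagonal lam + G)⁻¹ * Y) j ℓ| ≤ 2 * c * (lam j)⁻¹ := by
  have hc : 0 ≤ c := (abs_nonneg _).trans (hY j)
  calc _ ≤ (∑ a, |(diagonal lam + G)⁻¹ j a|) * c := abs_mul_apply_le_sum_abs_mul hY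
    _ ≤ 2 * (lam j)⁻¹ * c := by gcongr; exact sum_abs_inv_diagonal_add_row_le hlam hG hsmall j
    _ = 2 * c * (lam j)⁻¹ := by ring

theorem abs_mul_inv_diagonal_add_mul_apply_le {κ ν : Type*} {X : Matrix κ ι ℝ}
    {Y : Matrix ι ν ℝ} {c d : ℝ} (hlam : ∀ i, 0 < lam i) (hG : ∀ i j, |G i j| ≤ K)
    (hsmall : 2 * K * ∑ i, (lam i)⁻¹ ≤ 1) {j : κ} {ℓ : ν} (hX : ∀ a, |X j a| ≤ c)
    (hY : ∀ b, |Y b ℓ| ≤ d) (hc : 0 ≤ c) (hd : 0 ≤ d) :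
    |(X * (diagonal lam + G)⁻¹ * Y) j ℓ| ≤ 2 * c * d * ∑ i, (lam i)⁻¹ :=
  calc _ ≤ c * d * ∑ a, ∑ b, |(diagonal lam + G)⁻¹ a b| := abs_mul_mul_apply_le hX hY hc
    _ ≤ c * d * (2 * ∑ i, (lam i)⁻¹) := by
      gcongr; exact sum_sum_abs_inv_diagonal_add_le hlam hG hsmall
    _ = 2 * c * d * ∑ i, (lam i)⁻¹ := by ring

end DiagonallyDominant

end Matrix

theorem block_inverse_asymptotics_general (m n : ℕ) (M : ℝ) (hM : 0 < M)
    (B : Matrix (Fin m) (Fin m) ℝ) (hBdet : B.det ≠ 0) :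
    ∃ C lam0 : ℝ, 0 < C ∧ 0 < lam0 ∧
      ∀ (lam : Fin n → ℝ) (A' : Matrix (Fin n) (Fin n) ℝ) (A'' : Matrix (Fin n) (Fin m) ℝ),
        (∀ k, lam0 ≤ lam k) → A'.IsSymm → (∀ k, A' k k = 0) →
        (∀ i j, |A' i j| ≤ M) → (∀ i j, |A'' i j| ≤ M) →
        (∀ k : Fin n,
          |(Matrix.fromBlocks (Matrix.diagonal lam + A') A'' A''.transpose B)⁻¹
              (Sum.inl k) (Sum.inl k) - (lam k)⁻¹|
            ≤ C * (lam k)⁻¹ * ∑ i, (lam i)⁻¹)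
        ∧ (∀ j ℓ : Fin n, j ≠ ℓ →
          |(Matrix.fromBlocks (Matrix.diagonal lam + A') A'' A''.transpose B)⁻¹
              (Sum.inl j) (Sum.inl ℓ)| ≤ C * ((lam j) * (lam ℓ))⁻¹)
        ∧ (∀ (j : Fin n) (ℓ : Fin m),
          |(Matrix.fromBlocks (Matrix.diagonal lam + A') A'' A''.transpose B)⁻¹
              (Sum.inl j) (Sum.inr ℓ)| ≤ C * (lam j)⁻¹)
        ∧ (∀ j ℓ : Fin m,
          |(Matrix.fromBlocks (Matrix.diagonal lam + A') A'' A''.transpose B)⁻¹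
              (Sum.inr j) (Sum.inr ℓ) - B⁻¹ j ℓ| ≤ C * ∑ i, (lam i)⁻¹) := by
  set β := ∑ a, ∑ b, |B⁻¹ a b|
  set K := M + M * M * β
  have hMβ : 0 ≤ M * β := by positivity
  have hMβ2 : 0 ≤ M * β * (M * β) := by positivity
  have hK : 0 ≤ K := by positivity
  refine ⟨2 * K + 2 * (M * β) + 2 * (M * β) * (M * β), 2 * n * K + 1, by positivity,
    by positivity, fun lam A' A'' hlam _ _ hA' hA'' => ?_⟩
  have hlam_pos : ∀ k, 0 < lam k := fun k => lt_of_lt_of_le (by positivity) (hlam k)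
  have hsmall : 2 * K * ∑ i, (lam i)⁻¹ ≤ 1 := two_mul_mul_sum_inv_le_one hK (by simpa using hlam)
  have hG : ∀ i j, |(A' - A'' * B⁻¹ * A''ᵀ) i j| ≤ K := fun i j =>
    (abs_sub _ _).trans (add_le_add (hA' i j)
      (abs_mul_mul_apply_le (fun k => hA'' i k) (fun k => hA'' j k) hM.le))
  have hAB : ∀ a ℓ, |(A'' * B⁻¹) a ℓ| ≤ M * β := fun a ℓ =>
    abs_mul_apply_le_mul_sum_sum_abs (fun k => hA'' a k) hM.le
  have hBA : ∀ j a, |(B⁻¹ * A''ᵀ) j a| ≤ M * β := fun j a =>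
    (abs_mul_apply_le_sum_sum_abs_mul (fun k => hA'' a k) hM.le).trans_eq (mul_comm _ _)
  have hschur : diagonal lam + A' - A'' * B⁻¹ * A''ᵀ = diagonal lam + (A' - A'' * B⁻¹ * A''ᵀ) :=
    add_sub_assoc _ _ _
  rw [inv_fromBlocks_of_isUnit_det₂₂ _ _ _ _ hBdet.isUnit
    (hschur ▸ isUnit_det_diagonal_add hlam_pos hG hsmall), hschur]
  have hρ : 0 ≤ ∑ i, (lam i)⁻¹ := Finset.sum_nonneg fun i _ => (inv_pos.2 (hlam_pos i)).le
  refine ⟨fun k => ?_, fun j ℓ hjℓ => ?_, fun j ℓ => ?_, fun j ℓ => ?_⟩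
  · rw [fromBlocks_apply₁₁]
    refine (abs_inv_diagonal_add_apply_self_sub_le hlam_pos hG hsmall k).trans ?_
    have := hlam_pos k; gcongr; linarith
  · rw [fromBlocks_apply₁₁]
    refine (abs_inv_diagonal_add_apply_le_of_ne hlam_pos hG hsmall hjℓ).trans ?_
    have := mul_pos (hlam_pos j) (hlam_pos ℓ); gcongr; linarith
  · rw [fromBlocks_apply₁₂, Matrix.neg_apply, abs_neg, Matrix.mul_assoc]
    refine (abs_inv_diagonal_add_mul_apply_le hlam_pos hG hsmall fun a => hAB a ℓ).trans ?_
    have := hlam_pos j; gcongr; linarith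
  · rw [fromBlocks_apply₂₂, Matrix.add_apply, add_sub_cancel_left, Matrix.mul_assoc _ A'' B⁻¹]
    refine (abs_mul_inv_diagonal_add_mul_apply_le hlam_pos hG hsmall (hBA j)
      (fun b => hAB b ℓ) hMβ hMβ).trans ?_
    gcongr; linarith

/-- Inverse block entry asymptotics for
`𝒜 = fromBlocks (diag λ + A') A'' A''ᵀ B`:
`α_{kk} = λ_k⁻¹(1+O(ρ))`, `α_{jℓ} = O((λ_jλ_ℓ)⁻¹)` for `j ≠ ℓ` in the first block,
`α_{jℓ} = O(λ_j⁻¹)` for mixed indices, and `α_{j+n,ℓ+n} = b^{jℓ} + O(ρ)`. -/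
theorem block_inverse_asymptotics (m n : ℕ) (M : ℝ) (hM : 0 < M)
    (B : Matrix (Fin m) (Fin m) ℝ) (hBsymm : B.IsSymm) (hBdet : B.det ≠ 0)
    (hBbd : ∀ i j, |B i j| ≤ M) :
    ∃ C lam0 : ℝ, 0 < C ∧ 0 < lam0 ∧
      ∀ (lam : Fin n → ℝ) (A' : Matrix (Fin n) (Fin n) ℝ) (A'' : Matrix (Fin n) (Fin m) ℝ),
        (∀ k, lam0 ≤ lam k) → A'.IsSymm → (∀ k, A' k k = 0) →
        (∀ i j, |A' i j| ≤ M) → (∀ i j, |A'' i j| ≤ M) →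
        (∀ k : Fin n,
          |(Matrix.fromBlocks (Matrix.diagonal lam + A') A'' A''.transpose B)⁻¹
              (Sum.inl k) (Sum.inl k) - (lam k)⁻¹|
            ≤ C * (lam k)⁻¹ * ∑ i, (lam i)⁻¹)
        ∧ (∀ j ℓ : Fin n, j ≠ ℓ →
          |(Matrix.fromBlocks (Matrix.diagonal lam + A') A'' A''.transpose B)⁻¹
              (Sum.inl j) (Sum.inl ℓ)| ≤ C * ((lam j) * (lam ℓ))⁻¹)
        ∧ (∀ (j : Fin n) (ℓ : Fin m),
          |(Matrix.fromBlocks (Matrix.diagonal lam + A') A'' A''.transpose B)⁻¹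
              (Sum.inl j) (Sum.inr ℓ)| ≤ C * (lam j)⁻¹)
        ∧ (∀ j ℓ : Fin m,
          |(Matrix.fromBlocks (Matrix.diagonal lam + A') A'' A''.transpose B)⁻¹
              (Sum.inr j) (Sum.inr ℓ) - B⁻¹ j ℓ| ≤ C * ∑ i, (lam i)⁻¹) :=
  block_inverse_asymptotics_general m n M hM B hBdet
end
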